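/- arXiv:2306.05646 — 3 statements merged into one kernel-verified Lean document; each statement's English description precedes it below -/
import Mathlib

section
/- Let A and B be n×n Hermitian matrices with A positive definite and B positive semidefinite. Then A - B is positive semidefinite if and only if the spectral radius of A^{-1}B is at most 1, and A - B is positive definite if and only if the spectral radius of A^{-1}B is strictly less than 1. -/
/-!
Factor `A = Dᴴ * D` with `D` invertible and put `M = D⁻¹ᴴ * B * D⁻¹`, which is positive
semidefinite. Then `A - B = Dᴴ * (1 - M) * D` is congruent to `1 - M`, while
`A⁻¹ * B = D⁻¹ * M * D` is similar to `M`. Since the spectrum of `M` consists of nonnegative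
reals `λ`, and `1 - M` is positive (semi)definite iff every `1 - λ` is positive (nonnegative),
both equivalences follow.
-/

open scoped Matrix ComplexOrder

namespace Matrix

variable {𝕜 n : Type*} [RCLike 𝕜] [Fintype n] [DecidableEq n]

theorem IsHermitian.posSemidef_iff_spectrum_nonneg {A : Matrix n n 𝕜} (hA : A.IsHermitian) :
    A.PosSemidef ↔ ∀ z ∈ spectrum 𝕜 A, 0 ≤ z := by
  rw [posSemidef_iff_isHermitian_and_spectrum_nonneg, and_iff_right hA]
  rfl

theorem IsHermitian.posDef_iff_spectrum_pos {A : Matrix n n 𝕜} (hA : A.IsHermitian) :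
    A.PosDef ↔ ∀ z ∈ spectrum 𝕜 A, 0 < z := by
  simp [hA.posDef_iff_eigenvalues_pos, hA.spectrum_eq_image_range]

theorem PosSemidef.one_sub_posSemidef_iff {M : Matrix n n 𝕜} (hM : M.PosSemidef) :
    (1 - M).PosSemidef ↔ ∀ z ∈ spectrum 𝕜 M, ‖z‖ ≤ 1 := by
  rw [(isHermitian_one.sub hM.1).posSemidef_iff_spectrum_nonneg, ← map_one (algebraMap 𝕜 _),
    ← spectrum.singleton_sub_eq, Set.singleton_sub, Set.forall_mem_image]
  refine forall₂_congr fun z hz => ?_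
  obtain ⟨r, hr, rfl⟩ :=
    RCLike.nonneg_iff_exists_ofReal.1 (hM.1.posSemidef_iff_spectrum_nonneg.1 hM z hz)
  rw [RCLike.norm_of_nonneg hr, sub_nonneg, ← RCLike.ofReal_one, RCLike.ofReal_le_ofReal]

theorem PosSemidef.one_sub_posDef_iff {M : Matrix n n 𝕜} (hM : M.PosSemidef) :
    (1 - M).PosDef ↔ ∀ z ∈ spectrum 𝕜 M, ‖z‖ < 1 := by
  rw [(isHermitian_one.sub hM.1).posDef_iff_spectrum_pos, ← map_one (algebraMap 𝕜 _),
    ← spectrum.singleton_sub_eq, Set.singleton_sub, Set.forall_mem_image]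
  refine forall₂_congr fun z hz => ?_
  obtain ⟨r, hr, rfl⟩ :=
    RCLike.nonneg_iff_exists_ofReal.1 (hM.1.posSemidef_iff_spectrum_nonneg.1 hM z hz)
  rw [RCLike.norm_of_nonneg hr, sub_pos, ← RCLike.ofReal_one, RCLike.ofReal_lt_ofReal]

open scoped MatrixOrder in
theorem PosDef.exists_isUnit_eq_conjTranspose_mul_self {A : Matrix n n 𝕜} (hA : A.PosDef) :
    ∃ D, IsUnit D ∧ A = Dᴴ * D :=
  CStarAlgebra.isStrictlyPositive_iff_eq_star_mul_self.mp hA.isStrictlyPositive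

variable {D : Matrix n n 𝕜} (hD : IsUnit D) (B : Matrix n n 𝕜)
include hD

theorem conjTranspose_mul_self_sub_eq :
    Dᴴ * D - B = Dᴴ * (1 - D⁻¹ᴴ * B * D⁻¹) * D := by
  have h := (isUnit_iff_isUnit_det D).mp hD
  rw [mul_sub, sub_mul, mul_one, ← mul_assoc, ← mul_assoc, ← conjTranspose_mul,
    nonsing_inv_mul D h, conjTranspose_one, one_mul, mul_assoc, nonsing_inv_mul D h, mul_one]

theorem spectrum_inv_conjTranspose_mul_self_mul :
    spectrum 𝕜 ((Dᴴ * D)⁻¹ * B) = spectrum 𝕜 (D⁻¹ᴴ * B * D⁻¹) := by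
  have h := (isUnit_iff_isUnit_det D).mp hD
  rw [mul_inv_rev, ← conjTranspose_nonsing_inv,
    ← spectrum.units_conjugate' (u := hD.unit) (a := D⁻¹ᴴ * B * D⁻¹)]
  simp only [coe_units_inv, IsUnit.unit_spec, mul_assoc, nonsing_inv_mul D h, mul_one]

end Matrix

/-- Horn–Johnson: for Hermitian `A` positive definite and `B` positive semidefinite,
`A - B` is positive semidefinite iff the spectral radius of `A⁻¹ B` is at most `1`,
and positive definite iff it is strictly less than `1`. -/
theorem stmt2 {n : ℕ} (A B : Matrix (Fin n) (Fin n) ℂ)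
    (hA : A.PosDef) (hB : B.PosSemidef) :
    ((A - B).PosSemidef ↔ ∀ z ∈ spectrum ℂ (A⁻¹ * B), ‖z‖ ≤ 1) ∧
    ((A - B).PosDef ↔ ∀ z ∈ spectrum ℂ (A⁻¹ * B), ‖z‖ < 1) := by
  obtain ⟨D, hD, rfl⟩ := hA.exists_isUnit_eq_conjTranspose_mul_self
  have hM := hB.conjTranspose_mul_mul_same D⁻¹
  rw [Matrix.spectrum_inv_conjTranspose_mul_self_mul hD, Matrix.conjTranspose_mul_self_sub_eq hD]
  exact ⟨(Matrix.IsUnit.posSemidef_star_left_conjugate_iff hD).trans hM.one_sub_posSemidef_iff,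
    (Matrix.IsUnit.posDef_star_left_conjugate_iff hD).trans hM.one_sub_posDef_iff⟩
end

section
/- Let h(u) = (β/2)Σᵢ uᵢ⁴ with β > 0. For any u, w ∈ ℝ^n with ∥u∥ = ∥w∥ = 1, we have |h(w) - h(u) - (2β u^{[3]})^T(w - u)| ≤ 3β ∥w - u∥². -/
open scoped Matrix

/-- The Euclidean norm on `Fin n → ℝ`. -/
noncomputable def enorm {n : ℕ} (x : Fin n → ℝ) : ℝ := Real.sqrt (∑ i, x i ^ 2)

lemma enorm_sum_eq_one {n : ℕ} {x : Fin n → ℝ} (h : _root_.enorm x = 1) :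
    ∑ i, x i ^ 2 = 1 := by
  have hnn : 0 ≤ ∑ i, x i ^ 2 := Finset.sum_nonneg fun i _ => sq_nonneg _
  have := congrArg (· ^ 2) h
  simpa [_root_.enorm, Real.sq_sqrt hnn] using this

/-- First-order Taylor bound for `h(u) = (β/2) Σ uᵢ⁴` on the unit sphere:
`|h(w) - h(u) - (2β u^[3])ᵀ(w-u)| ≤ 3β ‖w-u‖²`. -/
theorem stmt17 {n : ℕ} (β : ℝ) (hβ : 0 < β) (u w : Fin n → ℝ)
    (hu : _root_.enorm u = 1) (hw : _root_.enorm w = 1) :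
    |β / 2 * ∑ i, w i ^ 4 - β / 2 * ∑ i, u i ^ 4
      - (fun i => 2 * β * u i ^ 3) ⬝ᵥ (w - u)|
      ≤ 3 * β * _root_.enorm (w - u) ^ 2 := by
  have hsu := enorm_sum_eq_one hu
  have hsw := enorm_sum_eq_one hw
  have hui : ∀ i, u i ^ 2 ≤ 1 := by
    intro i
    calc u i ^ 2 ≤ ∑ j, u j ^ 2 :=
      Finset.single_le_sum (fun j _ => sq_nonneg (u j)) (Finset.mem_univ i)
    _ = 1 := hsu
  have hwi : ∀ i, w i ^ 2 ≤ 1 := by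
    intro i
    calc w i ^ 2 ≤ ∑ j, w j ^ 2 :=
      Finset.single_le_sum (fun j _ => sq_nonneg (w j)) (Finset.mem_univ i)
    _ = 1 := hsw
  have hnd : 0 ≤ ∑ i, (w i - u i) ^ 2 := Finset.sum_nonneg fun i _ => sq_nonneg _
  have hend : _root_.enorm (w - u) ^ 2 = ∑ i, (w i - u i) ^ 2 := by
    simp [_root_.enorm, Real.sq_sqrt hnd]
  rw [hend]
  have hrw : β / 2 * ∑ i, w i ^ 4 - β / 2 * ∑ i, u i ^ 4
      - (fun i => 2 * β * u i ^ 3) ⬝ᵥ (w - u)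
      = ∑ i, (β / 2 * (w i ^ 4 - u i ^ 4 - 4 * u i ^ 3 * (w i - u i))) := by
    simp only [dotProduct, Pi.sub_apply, Finset.mul_sum, ← Finset.sum_sub_distrib]
    apply Finset.sum_congr rfl
    intro i _
    ring
  rw [hrw]
  calc |∑ i, (β / 2 * (w i ^ 4 - u i ^ 4 - 4 * u i ^ 3 * (w i - u i)))|
      ≤ ∑ i, |β / 2 * (w i ^ 4 - u i ^ 4 - 4 * u i ^ 3 * (w i - u i))| :=
        Finset.abs_sum_le_sum_abs _ _
    _ ≤ ∑ i, 3 * β * (w i - u i) ^ 2 := by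
        apply Finset.sum_le_sum
        intro i _
        rw [abs_mul, abs_of_pos (by linarith : (0:ℝ) < β / 2)]
        have h1 : |w i ^ 4 - u i ^ 4 - 4 * u i ^ 3 * (w i - u i)| ≤ 6 * (w i - u i) ^ 2 := by
          rw [abs_le]
          constructor
          · nlinarith [sq_nonneg (u i + w i), sq_nonneg (w i - u i), hui i, hwi i,
              sq_nonneg ((w i - u i) * (u i + w i))]
          · nlinarith [sq_nonneg (u i - w i), sq_nonneg (w i - u i), hui i, hwi i,
              sq_nonneg ((w i - u i) * (u i - w i))]
        nlinarith [h1, abs_nonneg (w i ^ 4 - u i ^ 4 - 4 * u i ^ 3 * (w i - u i))]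
    _ = 3 * β * ∑ i, (w i - u i) ^ 2 := by rw [Finset.mul_sum]
end

section
/- Let J be symmetric positive definite with λ_min(J) ≥ γ, and let u be a unit vector with J Δu = δu - r, u^T Δu = 0, Δu ≠ 0. Define, for θ ∈ (0,1], w = u + θΔu and d(θ) = 2(1/∥w∥ - 1) r^T u + (2θ/∥w∥) r^T Δu + R, with r^T u ≥ 0 and |R| ≤ M θ²∥Δu∥². Then for any η̄ > 0, whenever 0 < θ ≤ (2η̄ γ)/((1+η̄) M ∥w∥), one has d(θ) ≤ -(2θ/((1+η̄)∥w∥)) Δu^T J Δu < 0. -/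
/-!
Since `u ⟂ Δu` and `‖u‖ = 1`, `‖w‖² = 1 + θ²‖Δu‖² ≥ 1`, so the term `2(1/‖w‖ - 1) rᵀu` is
nonpositive. The linear system and `uᵀΔu = 0` give `rᵀΔu = -Δuᵀ J Δu`, so the middle term is the
descent `-(2θ/‖w‖) Δuᵀ J Δu`. Finally `Δuᵀ J Δu ≥ γ‖Δu‖²`, and the step-size restriction
`θ M ‖w‖ ≤ 2η̄γ/(1+η̄)` lets the remainder `R ≤ M θ² ‖Δu‖²` eat at most the fraction `η̄/(1+η̄)` of
that descent.
-/

open scoped Matrix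

noncomputable def euclidNormFin {n : ℕ} (x : Fin n → ℝ) : ℝ := Real.sqrt (∑ i, x i ^ 2)

open scoped MatrixOrder

theorem Matrix.IsHermitian.mul_dotProduct_self_le_of_le_eigenvalues {ι : Type*} [Fintype ι]
    [DecidableEq ι] {J : Matrix ι ι ℝ} (hJ : J.IsHermitian) {γ : ℝ}
    (hγ : ∀ i, γ ≤ hJ.eigenvalues i) (x : ι → ℝ) :
    γ * (x ⬝ᵥ x) ≤ x ⬝ᵥ J *ᵥ x := by
  have hle : algebraMap ℝ (Matrix ι ι ℝ) γ ≤ J := by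
    rw [algebraMap_le_iff_le_spectrum hJ, hJ.spectrum_real_eq_range_eigenvalues]
    rintro _ ⟨i, rfl⟩
    exact hγ i
  simpa [Matrix.sub_mulVec, Algebra.algebraMap_eq_smul_one, Matrix.smul_mulVec, dotProduct_sub]
    using (Matrix.le_iff.mp hle).dotProduct_mulVec_nonneg x

theorem euclidNormFin_sq {n : ℕ} (x : Fin n → ℝ) : euclidNormFin x ^ 2 = x ⬝ᵥ x := by
  rw [euclidNormFin, Real.sq_sqrt (by positivity)]
  simp only [dotProduct, sq]

theorem one_le_euclidNormFin_add_smul {n : ℕ} {u v : Fin n → ℝ} (hu : euclidNormFin u = 1)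
    (huv : u ⬝ᵥ v = 0) (θ : ℝ) : 1 ≤ euclidNormFin (u + θ • v) := by
  have hsq : euclidNormFin (u + θ • v) ^ 2 = 1 + θ ^ 2 * (v ⬝ᵥ v) := by
    rw [euclidNormFin_sq, ← one_pow 2, ← hu, euclidNormFin_sq]
    simp only [add_dotProduct, dotProduct_add, smul_dotProduct, dotProduct_smul, huv,
      dotProduct_comm v u, smul_eq_mul]
    ring
  have hvv : 0 ≤ v ⬝ᵥ v := by rw [← euclidNormFin_sq]; positivity
  have h0 : 0 ≤ euclidNormFin (u + θ • v) := Real.sqrt_nonneg _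
  refine (one_le_sq_iff₀ h0).mp ?_
  rw [hsq]
  nlinarith [sq_nonneg θ]

theorem descent_bound_of_le_step {W a q S R M θ γ η : ℝ} (hW : 1 ≤ W) (ha : 0 ≤ a) (hS : 0 ≤ S)
    (hq : γ * S ≤ q) (hR : R ≤ M * θ ^ 2 * S) (hM : 0 < M) (hη : 0 < η) (hθ : 0 < θ)
    (hθle : θ ≤ 2 * η * γ / ((1 + η) * M * W)) :
    2 * (1 / W - 1) * a + 2 * θ / W * (-q) + R ≤ -(2 * θ / ((1 + η) * W)) * q := by
  have hW0 : 0 < W := one_pos.trans_le hW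
  have hθM : θ * M ≤ 2 * η * γ / ((1 + η) * W) := by
    rw [le_div_iff₀ (by positivity)]
    rw [le_div_iff₀ (by positivity)] at hθle
    linarith
  have hR' : R ≤ 2 * θ * η * q / ((1 + η) * W) :=
    calc R ≤ θ * S * (θ * M) := by linarith
      _ ≤ θ * S * (2 * η * γ / ((1 + η) * W)) := by gcongr
      _ = 2 * θ * η * (γ * S) / ((1 + η) * W) := by ring
      _ ≤ 2 * θ * η * q / ((1 + η) * W) := by gcongr
  have ha' : 2 * (1 / W - 1) * a ≤ 0 :=
    mul_nonpos_of_nonpos_of_nonneg (by linarith [(div_le_one hW0).mpr hW]) ha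
  have hsplit : 2 * θ / W * (-q) + 2 * θ * η * q / ((1 + η) * W)
      = -(2 * θ / ((1 + η) * W)) * q := by
    field_simp
    ring
  linarith

theorem stmt18_general {n : ℕ} (J : Matrix (Fin n) (Fin n) ℝ) (hJh : J.IsHermitian)
    (γ : ℝ) (hγ : 0 < γ) (hmin : ∀ i, γ ≤ hJh.eigenvalues i)
    (u r Δu w : Fin n → ℝ) (δ θ M ηbar R d : ℝ)
    (hu : euclidNormFin u = 1)
    (hsys : J.mulVec Δu = δ • u - r) (horth : u ⬝ᵥ Δu = 0)
    (hΔ : Δu ≠ 0)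
    (hw : w = u + θ • Δu)
    (hd : d = 2 * (1 / euclidNormFin w - 1) * (r ⬝ᵥ u) + (2 * θ / euclidNormFin w) * (r ⬝ᵥ Δu) + R)
    (hru : 0 ≤ r ⬝ᵥ u) (hR : |R| ≤ M * θ ^ 2 * euclidNormFin Δu ^ 2)
    (hM : 0 < M) (hη : 0 < ηbar)
    (hθpos : 0 < θ) (hθle : θ ≤ 2 * ηbar * γ / ((1 + ηbar) * M * euclidNormFin w)) :
    d ≤ -(2 * θ / ((1 + ηbar) * euclidNormFin w)) * (Δu ⬝ᵥ J.mulVec Δu) ∧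
    -(2 * θ / ((1 + ηbar) * euclidNormFin w)) * (Δu ⬝ᵥ J.mulVec Δu) < 0 := by
  have hW : 1 ≤ euclidNormFin w := hw ▸ one_le_euclidNormFin_add_smul hu horth θ
  have hS : 0 < Δu ⬝ᵥ Δu :=
    lt_of_le_of_ne (by rw [← euclidNormFin_sq]; positivity)
      (Ne.symm (dotProduct_self_eq_zero.not.mpr hΔ))
  have hq := hJh.mul_dotProduct_self_le_of_le_eigenvalues hmin Δu
  have hrΔ : r ⬝ᵥ Δu = -(Δu ⬝ᵥ J *ᵥ Δu) := by
    rw [hsys, dotProduct_sub, dotProduct_smul, dotProduct_comm Δu u, dotProduct_comm Δu r, horth]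
    simp
  refine ⟨?_, ?_⟩
  · rw [hd, hrΔ]
    refine descent_bound_of_le_step hW hru hS.le hq ?_ hM hη hθpos hθle
    rw [← euclidNormFin_sq]
    exact (le_abs_self R).trans hR
  · have hq0 : 0 < Δu ⬝ᵥ J *ᵥ Δu := (mul_pos hγ hS).trans_le hq
    have hW0 : 0 < euclidNormFin w := one_pos.trans_le hW
    have : 0 < 2 * θ / ((1 + ηbar) * euclidNormFin w) * (Δu ⬝ᵥ J *ᵥ Δu) := by positivity
    linarith

/-- Step-size analysis: under the stated hypotheses, for any `η̄ > 0` and any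
`0 < θ ≤ 2η̄γ/((1+η̄) M ‖w‖)`, the descent quantity satisfies
`d(θ) ≤ -(2θ/((1+η̄)‖w‖)) Δuᵀ J Δu < 0`. -/
theorem stmt18 {n : ℕ} (J : Matrix (Fin n) (Fin n) ℝ) (hJh : J.IsHermitian)
    (γ : ℝ) (hγ : 0 < γ) (hmin : ∀ i, γ ≤ hJh.eigenvalues i)
    (u r Δu w : Fin n → ℝ) (δ θ M ηbar R d : ℝ)
    (hu : euclidNormFin u = 1)
    (hsys : J.mulVec Δu = δ • u - r) (horth : u ⬝ᵥ Δu = 0)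
    (hΔ : Δu ≠ 0) (hθ1 : θ ≤ 1)
    (hw : w = u + θ • Δu)
    (hd : d = 2 * (1 / euclidNormFin w - 1) * (r ⬝ᵥ u) + (2 * θ / euclidNormFin w) * (r ⬝ᵥ Δu) + R)
    (hru : 0 ≤ r ⬝ᵥ u) (hR : |R| ≤ M * θ ^ 2 * euclidNormFin Δu ^ 2)
    (hM : 0 < M) (hη : 0 < ηbar)
    (hθpos : 0 < θ) (hθle : θ ≤ 2 * ηbar * γ / ((1 + ηbar) * M * euclidNormFin w)) :
    d ≤ -(2 * θ / ((1 + ηbar) * euclidNormFin w)) * (Δu ⬝ᵥ J.mulVec Δu) ∧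
    -(2 * θ / ((1 + ηbar) * euclidNormFin w)) * (Δu ⬝ᵥ J.mulVec Δu) < 0 :=
  stmt18_general J hJh γ hγ hmin u r Δu w δ θ M ηbar R d hu hsys horth hΔ hw hd hru hR hM hη hθpos
    hθle
end
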